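/- arXiv:1806.00170 — 2 statements merged into one kernel-verified Lean document; each statement's English description precedes it below -/
import Mathlib

section
/- Positivity for vector spaces (quadruple rank inequality): Let k be a field and let F : (ℝ, ≤) → Vect be a functor into finite-dimensional k-vector spaces. Then for all real numbers a ≤ b ≤ c ≤ d, rank F(b ≤ c) + rank F(a ≤ d) ≥ rank F(a ≤ c) + rank F(b ≤ d), where rank denotes the dimension of the image of a linear map and F(x ≤ y) : F(x) → F(y) is the structure map. -/
open CategoryTheory CategoryTheory.Limits
open scoped Classical ENNReal

noncomputable section

universe v u

/-! ## The poset of intervals -/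

/-- `Rbar` is `ℝ ∪ {∞}`. -/
abbrev Rbar := WithTop ℝ

/-- An element of the poset `Dgm`: an interval `[p, q)` with `p ≤ q` in `ℝ ∪ {∞}`. -/
structure PDInterval where
  p : Rbar
  q : Rbar
  hle : p ≤ q

namespace PDInterval

/-- `I.Sub J` means `I ⊆ J` as intervals, i.e. `J.p ≤ I.p` and `I.q ≤ J.q`. -/
def Sub (I J : PDInterval) : Prop := J.p ≤ I.p ∧ I.q ≤ J.q

/-- The diagonal `Δ ⊆ Dgm` consists of the empty intervals `[p, p)`. -/
def onDiag (I : PDInterval) : Prop := I.p = I.q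

/-- The interval `[a, b)` with real endpoints. -/
def mk' (a b : ℝ) (h : a ≤ b) : PDInterval := ⟨(a : Rbar), (b : Rbar), by exact_mod_cast h⟩

/-- The interval `[a, ∞)`. -/
def mkInf (a : ℝ) : PDInterval := ⟨(a : Rbar), ⊤, le_top⟩

/-- Membership in `Dgm(S)`, where `S` is a finite set of reals together (implicitly)
with `∞`: both endpoints of `I` lie in `S ∪ {∞}`. -/
def memDgmS (S : Finset ℝ) (I : PDInterval) : Prop :=
  (I.p = ⊤ ∨ ∃ s ∈ S, I.p = (s : Rbar)) ∧ (I.q = ⊤ ∨ ∃ s ∈ S, I.q = (s : Rbar))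

/-- The `ε`-box around an interval `I = [p, q)`: all intervals `[r, s)` with
`p - ε < r ≤ p + ε` and `q - ε ≤ s < q + ε`, declared empty if `q - ε ≤ p + ε`.
For `q = ∞` it consists of the intervals `[r, ∞)` with `p - ε < r ≤ p + ε`. -/
def box (ε : ℝ) (I : PDInterval) : Set PDInterval :=
  if I.p = ⊤ then ∅
  else if I.q = ⊤ then
    { J | J.q = ⊤ ∧ ∃ r : ℝ, J.p = (r : Rbar) ∧
        WithTop.untopD 0 I.p - ε < r ∧ r ≤ WithTop.untopD 0 I.p + ε }
  else if WithTop.untopD 0 I.q - ε ≤ WithTop.untopD 0 I.p + ε then ∅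
  else
    { J | ∃ r s : ℝ, J.p = (r : Rbar) ∧ J.q = (s : Rbar) ∧
        WithTop.untopD 0 I.p - ε < r ∧ r ≤ WithTop.untopD 0 I.p + ε ∧
        WithTop.untopD 0 I.q - ε ≤ s ∧ s < WithTop.untopD 0 I.q + ε }

/-- The distance between two endpoints in `ℝ ∪ {∞}`; it is `∞` if exactly one of the two
endpoints is `∞`. -/
def edist' : Rbar → Rbar → ℝ≥0∞ := fun a b =>
  if a = ⊤ then (if b = ⊤ then 0 else ⊤)
  else if b = ⊤ then ⊤
  else ENNReal.ofReal |WithTop.untopD 0 a - WithTop.untopD 0 b|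

/-- The distance `max (|p₁ - p₂|, |q₁ - q₂|)` between two intervals. -/
def pairDist (I J : PDInterval) : ℝ≥0∞ := max (edist' I.p J.p) (edist' I.q J.q)

end PDInterval

/-! ## Matchings and the bottleneck distance -/

section Matching

variable {G : Type*} [AddCommGroup G]

/-- A matching between two finitely supported functions `Y₁ Y₂ : Dgm → G`:
a map `γ : Dgm × Dgm → G` whose row sums give `Y₁` off the diagonal and whose column
sums give `Y₂` off the diagonal. -/
def IsMatching (Y₁ Y₂ : PDInterval → G) (γ : PDInterval → PDInterval → G) : Prop :=
  (∀ I : PDInterval, ¬ I.onDiag →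
    (Function.support (γ I)).Finite ∧ Y₁ I = ∑ᶠ J, γ I J) ∧
  (∀ J : PDInterval, ¬ J.onDiag →
    (Function.support (fun I => γ I J)).Finite ∧ Y₂ J = ∑ᶠ I, γ I J)

/-- The norm of a matching: the supremum of `max (|p₁ - p₂|, |q₁ - q₂|)` over all pairs
`I = [p₁, q₁)`, `J = [p₂, q₂)` with `γ I J ≠ 0`. -/
def matchingNorm (γ : PDInterval → PDInterval → G) : ℝ≥0∞ :=
  ⨆ (I : PDInterval) (J : PDInterval) (_ : γ I J ≠ 0), PDInterval.pairDist I J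

/-- The bottleneck distance between two persistence diagrams: the infimum of the norms
of all matchings between them. -/
def bottleneckDist (Y₁ Y₂ : PDInterval → G) : ℝ≥0∞ :=
  ⨅ (γ : PDInterval → PDInterval → G) (_ : IsMatching Y₁ Y₂ γ), matchingNorm γ

end Matching

/-! ## Persistence modules, constructibility, interleavings -/

section PersMod

variable (C : Type u) [Category.{v} C]

/-- A persistence module `F : (ℝ, ≤) → C` is `S`-constructible (for a finite set
`S = {s₁ < ⋯ < s_k} ⊆ ℝ`, to which `∞` is implicitly adjoined) if `F p` is a zero object
for `p < s₁` and `F (p ≤ q)` is an isomorphism whenever no element of `S` lies in `(p, q]`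
and some element of `S` is `≤ p`. -/
def IsConstructibleOn (F : ℝ ⥤ C) (S : Finset ℝ) : Prop :=
  (∀ p : ℝ, (∀ s ∈ S, p < s) → IsZero (F.obj p)) ∧
  (∀ (p q : ℝ) (h : p ≤ q), (∃ s ∈ S, s ≤ p) → (∀ s ∈ S, s ≤ p ∨ q < s) →
    IsIso (F.map (homOfLE h)))

/-- A persistence module is constructible if it is `S`-constructible for some finite `S`. -/
def IsConstructible (F : ℝ ⥤ C) : Prop := ∃ S : Finset ℝ, IsConstructibleOn C F S

/-- The underlying type of the poset `ℝ ×_ε {0, 1}`. -/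
def InterPoset (_ : ℝ) : Type := ℝ × Bool

namespace InterPoset

variable (ε : ℝ)

/-- The partial order on `ℝ ×_ε {0, 1}`: `(p, t) ≤ (q, s)` iff `t = s` and `p ≤ q`, or
`t ≠ s` and `p + ε ≤ q`.  (For `ε < 0` we use `max ε 0` in place of `ε` so that the
order is well defined; all statements only use `ε ≥ 0`, where this agrees with the paper.) -/
instance : Preorder (InterPoset ε) where
  le x y := x.1 + (if x.2 = y.2 then 0 else max ε 0) ≤ y.1
  le_refl x := by simp
  le_trans x y z h₁ h₂ := by
    have hm : (0 : ℝ) ≤ max ε 0 := le_max_right _ _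
    by_cases h12 : x.2 = y.2 <;> by_cases h23 : y.2 = z.2 <;>
      [skip; skip; skip; have hxz : x.2 = z.2 := by
        revert h12 h23; cases x.2 <;> cases y.2 <;> cases z.2 <;> simp] <;>
      simp_all <;> linarith [le_max_right ε (0:ℝ)]

/-- The embedding `ι₀ : ℝ → ℝ ×_ε {0, 1}`, `p ↦ (p, 0)`. -/
def iota0 : ℝ ⥤ InterPoset ε :=
  Monotone.functor (f := fun p => ((p, false) : InterPoset ε))
    (fun _ _ h => by simpa [(· ≤ ·)] using h)

/-- The embedding `ι₁ : ℝ → ℝ ×_ε {0, 1}`, `p ↦ (p, 1)`. -/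
def iota1 : ℝ ⥤ InterPoset ε :=
  Monotone.functor (f := fun p => ((p, true) : InterPoset ε))
    (fun _ _ h => by simpa [(· ≤ ·)] using h)

end InterPoset

/-- Two persistence modules `F` and `G` are `ε`-interleaved if there is a functor
`Φ : ℝ ×_ε {0, 1} → C` whose restrictions along `ι₀` and `ι₁` are naturally isomorphic
to `F` and `G` respectively. -/
def Interleaved (F G : ℝ ⥤ C) (ε : ℝ) : Prop :=
  ∃ Φ : InterPoset ε ⥤ C,
    Nonempty (InterPoset.iota0 ε ⋙ Φ ≅ F) ∧ Nonempty (InterPoset.iota1 ε ⋙ Φ ≅ G)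

/-- The interleaving distance: the infimum of all `ε ≥ 0` such that `F` and `G` are
`ε`-interleaved (`∞` if there is no interleaving). -/
def interleavingDist (F G : ℝ ⥤ C) : ℝ≥0∞ :=
  sInf { x : ℝ≥0∞ | ∃ ε : ℝ, 0 ≤ ε ∧ Interleaved C F G ε ∧ x = ENNReal.ofReal ε }

end PersMod

/-! ## The Grothendieck group -/

section K0

variable (C : Type u) [Category.{v} C] [Limits.HasZeroMorphisms C]

/-- The subgroup of relations coming from short exact sequences `0 → a → b → c → 0`:
it is generated by the elements `[b] - ([a] + [c])`. -/
def sesRelations : AddSubgroup (FreeAbelianGroup C) :=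
  AddSubgroup.closure { x | ∃ S : ShortComplex C, S.ShortExact ∧
    x = FreeAbelianGroup.of S.X₂ - (FreeAbelianGroup.of S.X₁ + FreeAbelianGroup.of S.X₃) }

/-- The Grothendieck group of `C`: the free abelian group on the objects of `C` modulo one
relation `[b] = [a] + [c]` for each short exact sequence `0 → a → b → c → 0`.  (Isomorphic
objects automatically get identified, via the short exact sequences `0 → a → b → 0 → 0`.) -/
def K0 : Type u := FreeAbelianGroup C ⧸ sesRelations C

instance : AddCommGroup (K0 C) := by unfold K0; infer_instance

/-- The class `[a] ∈ K0 C` of an object `a` of `C`. -/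
def K0.mk (a : C) : K0 C := QuotientAddGroup.mk (FreeAbelianGroup.of a)

/-- The translation-invariant partial order on the Grothendieck group:
`x ⪯ y` iff `y - x = [c]` for some object `c` of `C`. -/
def K0.le (x y : K0 C) : Prop := ∃ c : C, y - x = K0.mk C c

end K0

/-! ## The rank function and the persistence diagram -/

section Rank

variable (C : Type u) [Category.{v} C] [Abelian C]

/-- The class in `K0 C` of the image of the structure map `F (a ≤ b)`. -/
def K0.imageClass (F : ℝ ⥤ C) {a b : ℝ} (h : a ≤ b) : K0 C :=
  K0.mk C (Limits.image (F.map (homOfLE h)))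

/-- The hypothesis on the auxiliary constant `δ > 0` used to define the rank function of an
`S`-constructible module: `s_{i-1} < s_i - δ` for consecutive elements of `S`. -/
def GoodDelta (S : Finset ℝ) (δ : ℝ) : Prop :=
  0 < δ ∧ ∀ s ∈ S, ∀ s' ∈ S, s < s' → s < s' - δ

/-- The rank function `dF : Dgm → K0 C` of an `S`-constructible persistence module `F`
(relative to the auxiliary constant `δ`): for `I = [p, s)` with `s ∈ S` it is the class of
the image of `F (p ≤ s - δ)`; for `I = [p, ∞)` it is the class of the image of `F (p ≤ z)`
for `z ≥ max p (max S)`; and for all other `I = [p, q)` it is the class of the image of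
`F (p ≤ q)`.  (Endpoints are adjusted, using constructibility, so that the formula makes
sense for every interval of `Dgm`.) -/
def rankFn (F : ℝ ⥤ C) (S : Finset ℝ) (δ : ℝ) (I : PDInterval) : K0 C :=
  let M : ℝ := (if h : S.Nonempty then S.max' h else 0) + 1
  let lp : ℝ := WithTop.untopD M I.p
  let q' : ℝ :=
    if I.q = ⊤ then max lp M
    else if WithTop.untopD 0 I.q ∈ S then WithTop.untopD 0 I.q - δ else WithTop.untopD 0 I.q
  K0.imageClass C F (min_le_right lp q')

/-- `Ft` is the persistence diagram of the `S`-constructible module `F` (with rank function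
taken relative to `δ`): it is finitely supported and satisfies the Möbius inversion formula
`dF I = ∑_{J ⊇ I} Ft J` for every interval `I ∈ Dgm`. -/
def IsPersDiagramOf (F : ℝ ⥤ C) (S : Finset ℝ) (δ : ℝ) (Ft : PDInterval → K0 C) : Prop :=
  (Function.support Ft).Finite ∧
  ∀ I : PDInterval, rankFn C F S δ I = ∑ᶠ (J : PDInterval) (_ : I.Sub J), Ft J

end Rank

end

/-! ## Persistence modules of finite-dimensional vector spaces: `ℤ`-valued diagrams -/

section VectRank

variable {k : Type u} [Field k]

/-- The rank (the dimension of the image) of the structure map `F (a ≤ b)` of a persistence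
module of finite-dimensional `k`-vector spaces. -/
noncomputable def rankOfMap (F : ℝ ⥤ FGModuleCat k) {a b : ℝ} (h : a ≤ b) : ℤ :=
  Module.finrank k (LinearMap.range (F.map (homOfLE h)).hom.hom)

/-- The `ℤ`-valued rank function `dF : Dgm → ℤ` of an `S`-constructible persistence module
of finite-dimensional vector spaces (relative to the auxiliary constant `δ`); compare
`rankFn`. -/
noncomputable def rankFnZ (F : ℝ ⥤ FGModuleCat k) (S : Finset ℝ) (δ : ℝ) (I : PDInterval) : ℤ :=
  let M : ℝ := (if h : S.Nonempty then S.max' h else 0) + 1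
  let lp : ℝ := WithTop.untopD M I.p
  let q' : ℝ :=
    if I.q = ⊤ then max lp M
    else if WithTop.untopD 0 I.q ∈ S then WithTop.untopD 0 I.q - δ else WithTop.untopD 0 I.q
  rankOfMap F (min_le_right lp q')

/-- `Ft` is the `ℤ`-valued persistence diagram of the `S`-constructible persistence module
`F` of finite-dimensional vector spaces: it is finitely supported and satisfies the Möbius
inversion formula `dF I = ∑_{J ⊇ I} Ft J` for every `I ∈ Dgm`. -/
def IsPersDiagramZOf (F : ℝ ⥤ FGModuleCat k) (S : Finset ℝ) (δ : ℝ)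
    (Ft : PDInterval → ℤ) : Prop :=
  (Function.support Ft).Finite ∧
  ∀ I : PDInterval, rankFnZ F S δ I = ∑ᶠ (J : PDInterval) (_ : I.Sub J), Ft J

end VectRank

open LinearMap Module Submodule

/-
Write f, g, h for the structure maps of F along a ≤ b ≤ c ≤ d, so that the four ranks are those
of g, h ∘ g ∘ f, g ∘ f and h ∘ g. The inequality is then the Frobenius rank inequality
rank (g ∘ f) + rank (h ∘ g) ≤ rank g + rank (h ∘ g ∘ f). With R = range g ⊇ R' = range (g ∘ f),
rank–nullity for h restricted to R' and to R shows that the rank lost by applying h to R' is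
dim (R' ∩ ker h), which is at most the rank dim (R ∩ ker h) lost on the larger space R.
-/

section LinearAlgebra

variable {K V W X Y : Type*} [DivisionRing K]
  [AddCommGroup V] [Module K V] [AddCommGroup W] [Module K W]
  [AddCommGroup X] [Module K X] [AddCommGroup Y] [Module K Y]

theorem Submodule.finrank_map_add_finrank_inf_ker [FiniteDimensional K V]
    (φ : V →ₗ[K] W) (R : Submodule K V) :
    finrank K (R.map φ) + finrank K ↥(R ⊓ ker φ) = finrank K R := by
  have rank_nullity := (φ.domRestrict R).finrank_range_add_finrank_ker
  rwa [range_domRestrict, ker_domRestrict, (equivSubtypeMap R _).finrank_eq,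
    map_comap_subtype] at rank_nullity

theorem Submodule.finrank_add_finrank_map_le_of_le [FiniteDimensional K V]
    (φ : V →ₗ[K] W) {R' R : Submodule K V} (hR : R' ≤ R) :
    finrank K R' + finrank K (R.map φ) ≤ finrank K R + finrank K (R'.map φ) := by
  have nullity_R' := finrank_map_add_finrank_inf_ker φ R'
  have nullity_R := finrank_map_add_finrank_inf_ker φ R
  have kernel_mono : finrank K ↥(R' ⊓ ker φ) ≤ finrank K ↥(R ⊓ ker φ) :=
    Submodule.finrank_mono (inf_le_inf_right _ hR)
  omega

/-- The Frobenius rank inequality. -/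
theorem LinearMap.finrank_range_comp_add_finrank_range_comp_le [FiniteDimensional K X]
    (f : V →ₗ[K] W) (g : W →ₗ[K] X) (h : X →ₗ[K] Y) :
    finrank K (range (g ∘ₗ f)) + finrank K (range (h ∘ₗ g)) ≤
      finrank K (range g) + finrank K (range (h ∘ₗ g ∘ₗ f)) := by
  rw [range_comp, range_comp, range_comp, range_comp]
  exact finrank_add_finrank_map_le_of_le h (map_le_range (f := g))

end LinearAlgebra

section PersistenceModule

variable {k : Type*} [Field k] (F : ℝ ⥤ FGModuleCat k)

def structureMap {a b : ℝ} (h : a ≤ b) : F.obj a →ₗ[k] F.obj b :=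
  (F.map (homOfLE h)).hom.hom

theorem structureMap_trans {a b c : ℝ} (hab : a ≤ b) (hbc : b ≤ c) :
    structureMap F (hab.trans hbc) = structureMap F hbc ∘ₗ structureMap F hab := by
  rw [structureMap, ← homOfLE_comp hab hbc, F.map_comp]
  rfl

theorem rankOfMap_eq_finrank_range {a b : ℝ} (h : a ≤ b) :
    rankOfMap F h = finrank k (range (structureMap F h)) :=
  rfl

end PersistenceModule

/-- **Positivity for vector spaces (quadruple rank inequality)**: for a persistence module
`F : (ℝ, ≤) → Vect` of finite-dimensional `k`-vector spaces and reals `a ≤ b ≤ c ≤ d`,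
`rank F(b ≤ c) + rank F(a ≤ d) ≥ rank F(a ≤ c) + rank F(b ≤ d)`. -/
theorem rank_quadruple_inequality {k : Type u} [Field k] (F : ℝ ⥤ FGModuleCat k)
    (a b c d : ℝ) (hab : a ≤ b) (hbc : b ≤ c) (hcd : c ≤ d) :
    rankOfMap F hbc + rankOfMap F (hab.trans (hbc.trans hcd)) ≥
      rankOfMap F (hab.trans hbc) + rankOfMap F (hbc.trans hcd) := by
  simp only [rankOfMap_eq_finrank_range]
  rw [structureMap_trans F hab (hbc.trans hcd), structureMap_trans F hbc hcd,
    structureMap_trans F hab hbc]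
  exact_mod_cast finrank_range_comp_add_finrank_range_comp_le
    (structureMap F hab) (structureMap F hbc) (structureMap F hcd)
end

section
/- The interleaving infimum is attained: Let F and G be constructible persistence modules valued in a skeletally small abelian category C, and let ε₀ ≥ 0. If F and G are ε-interleaved for every ε > ε₀, then F and G are ε₀-interleaved. Consequently, if F and G are interleaved for some ε, the infimum defining the interleaving distance d_I(F,G) is attained. -/
open CategoryTheory CategoryTheory.Limits
open scoped Classical ENNReal

/-!
Choose `μ > 0` so small that no difference of two critical values of `F` and `G` lies in
`(ε₀, ε₀ + 3μ)` or in `(2ε₀, 2ε₀ + 3μ)`, and take an `(ε₀ + μ)`-interleaving `φ, ψ`. Inside a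
cell between consecutive critical values the structure maps of `F` are invertible, so `F` has
maps `F u ⟶ F v` whenever the cell of `u` is at most that of `v`, and likewise for `G`. The new
map `F p ⟶ G (p + ε₀)` is `F p ⟶ F a ⟶ G (a + ε₀ + μ) ⟶ G (p + ε₀)` for any point `a` for which
the outer maps exist; by naturality of `φ` it does not depend on `a`, and the choice of `μ`
provides such points (`a = p` or `a = p - μ`). For the triangle identities the points for the
two maps can be chosen so that the composite factors through `φ` followed by `ψ`, where the
triangle identities of the old interleaving apply. As interleavings persist when `ε` grows,
the infimum defining `d_I` is then a minimum.
-/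

open CategoryTheory

noncomputable section

variable {C : Type u} [Category.{v} C]

namespace InterPoset

variable {ε : ℝ}

lemma fst_le_fst {x y : InterPoset ε} (h : x ≤ y) (hxy : x.2 = y.2) : x.1 ≤ y.1 := by
  have h' : x.1 + (if x.2 = y.2 then 0 else max ε 0) ≤ y.1 := h
  simpa [hxy] using h'

lemma le_iff_of_snd_ne (hε : 0 ≤ ε) {x y : InterPoset ε} (hxy : x.2 ≠ y.2) :
    x ≤ y ↔ x.1 + ε ≤ y.1 := by
  change x.1 + (if x.2 = y.2 then 0 else max ε 0) ≤ y.1 ↔ _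
  rw [if_neg hxy, max_eq_left hε]

lemma monotone_id_of_le {ε' : ℝ} (h : ε ≤ ε') :
    Monotone (α := InterPoset ε') (β := InterPoset ε) id := by
  intro x y hxy
  change x.1 + (if x.2 = y.2 then 0 else max ε' 0) ≤ y.1 at hxy
  change x.1 + (if x.2 = y.2 then 0 else max ε 0) ≤ y.1
  split_ifs at hxy ⊢ <;> linarith [max_le_max_right 0 h]

end InterPoset

lemma Interleaved.mono {F G : ℝ ⥤ C} {ε ε' : ℝ} (h : Interleaved C F G ε) (hε : ε ≤ ε') :
    Interleaved C F G ε' := by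
  obtain ⟨Φ, i, j⟩ := h
  exact ⟨(InterPoset.monotone_id_of_le hε).functor ⋙ Φ, i, j⟩

section Restriction

variable {P : Type*} [Preorder P] (Φ : P ⥤ C) {ι κ ν : ℝ ⥤ P} {D E K : ℝ ⥤ C}

def restrictedMap (i : ι ⋙ Φ ≅ D) (j : κ ⋙ Φ ≅ E) {x y : ℝ} (h : ι.obj x ≤ κ.obj y) :
    D.obj x ⟶ E.obj y :=
  i.inv.app x ≫ Φ.map (homOfLE h) ≫ j.hom.app y

lemma restrictedMap_comp (i : ι ⋙ Φ ≅ D) (j : κ ⋙ Φ ≅ E) (k : ν ⋙ Φ ≅ K) {x y z : ℝ}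
    (h : ι.obj x ≤ κ.obj y) (h' : κ.obj y ≤ ν.obj z) :
    restrictedMap Φ i j h ≫ restrictedMap Φ j k h' = restrictedMap Φ i k (h.trans h') := by
  simp only [restrictedMap, Category.assoc, Iso.hom_inv_id_app_assoc, ← Φ.map_comp_assoc]
  rfl

lemma map_eq_restrictedMap (i : ι ⋙ Φ ≅ D) {x y : ℝ} (h : x ≤ y) :
    D.map (homOfLE h) = restrictedMap Φ i i (ι.map (homOfLE h)).le :=
  (NatIso.naturality_1 i (homOfLE h)).symm

end Restriction

/-- The triangle identities quantify over the proof of `p ≤ p + ε + ε`, so that the structure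
makes sense for every `ε`. -/
structure InterleavingData (F G : ℝ ⥤ C) (ε : ℝ) where
  φ (p : ℝ) : F.obj p ⟶ G.obj (p + ε)
  ψ (p : ℝ) : G.obj p ⟶ F.obj (p + ε)
  φ_natural (p q : ℝ) (h : p ≤ q) :
    F.map (homOfLE h) ≫ φ q = φ p ≫ G.map (homOfLE (add_le_add_left h ε))
  ψ_natural (p q : ℝ) (h : p ≤ q) :
    G.map (homOfLE h) ≫ ψ q = ψ p ≫ F.map (homOfLE (add_le_add_left h ε))
  φ_comp_ψ (p : ℝ) (h : p ≤ p + ε + ε) : φ p ≫ ψ (p + ε) = F.map (homOfLE h)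
  ψ_comp_φ (p : ℝ) (h : p ≤ p + ε + ε) : ψ p ≫ φ (p + ε) = G.map (homOfLE h)

namespace InterleavingData

variable {F G : ℝ ⥤ C} {ε : ℝ}

def symm (d : InterleavingData F G ε) : InterleavingData G F ε :=
  ⟨d.ψ, d.φ, d.ψ_natural, d.φ_natural, d.ψ_comp_φ, d.φ_comp_ψ⟩

lemma φ_comp_map_comp_ψ (d : InterleavingData F G ε) (hε : 0 ≤ ε) {p q : ℝ} (h : p + ε ≤ q) :
    d.φ p ≫ G.map (homOfLE h) ≫ d.ψ q = F.map (homOfLE (by linarith : p ≤ q + ε)) := by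
  rw [d.ψ_natural _ _ h, ← Category.assoc, d.φ_comp_ψ p (by linarith), ← F.map_comp]
  rfl

lemma ψ_comp_map_comp_φ (d : InterleavingData F G ε) (hε : 0 ≤ ε) {p q : ℝ} (h : p + ε ≤ q) :
    d.ψ p ≫ F.map (homOfLE h) ≫ d.φ q = G.map (homOfLE (by linarith : p ≤ q + ε)) :=
  d.symm.φ_comp_map_comp_ψ hε h

@[simp] lemma symm_φ (d : InterleavingData F G ε) : d.symm.φ = d.ψ := rfl

def functor (d : InterleavingData F G ε) (hε : 0 ≤ ε) : InterPoset ε ⥤ C where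
  obj z := match z with
    | (p, false) => F.obj p
    | (p, true) => G.obj p
  map {z w} h := match z, w, h with
    | (_, false), (_, false), h =>
        F.map (homOfLE (InterPoset.fst_le_fst h.le rfl))
    | (p, false), (_, true), h =>
        d.φ p ≫ G.map (homOfLE ((InterPoset.le_iff_of_snd_ne hε Bool.false_ne_true).1 h.le))
    | (p, true), (_, false), h =>
        d.ψ p ≫ F.map (homOfLE ((InterPoset.le_iff_of_snd_ne hε Bool.false_ne_true.symm).1 h.le))
    | (_, true), (_, true), h =>
        G.map (homOfLE (InterPoset.fst_le_fst h.le rfl))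
  map_id := by
    rintro ⟨p, _ | _⟩
    · exact F.map_id p
    · exact G.map_id p
  map_comp := by
    rintro ⟨p, _ | _⟩ ⟨q, _ | _⟩ ⟨r, _ | _⟩ h k <;> dsimp only
    · rw [← F.map_comp]; rfl
    · rw [← Category.assoc, d.φ_natural, Category.assoc, ← G.map_comp]; rfl
    · rw [Category.assoc, ← Category.assoc (G.map _), ← Category.assoc (d.φ p),
        d.φ_comp_map_comp_ψ hε, ← F.map_comp]; rfl
    · rw [Category.assoc, ← G.map_comp]; rfl
    · rw [Category.assoc, ← F.map_comp]; rfl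
    · rw [Category.assoc, ← Category.assoc (F.map _), ← Category.assoc (d.ψ p),
        d.ψ_comp_map_comp_φ hε, ← G.map_comp]; rfl
    · rw [← Category.assoc, d.ψ_natural, Category.assoc, ← F.map_comp]; rfl
    · rw [← G.map_comp]; rfl

lemma interleaved (d : InterleavingData F G ε) (hε : 0 ≤ ε) : Interleaved C F G ε :=
  ⟨d.functor hε, ⟨Iso.refl F⟩, ⟨Iso.refl G⟩⟩

end InterleavingData

lemma Interleaved.nonempty_interleavingData {F G : ℝ ⥤ C} {ε : ℝ} (h : Interleaved C F G ε)
    (hε : 0 ≤ ε) : Nonempty (InterleavingData F G ε) := by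
  obtain ⟨Φ, ⟨i⟩, ⟨j⟩⟩ := h
  have le₀₁ (p : ℝ) : (InterPoset.iota0 ε).obj p ≤ (InterPoset.iota1 ε).obj (p + ε) :=
    (InterPoset.le_iff_of_snd_ne hε Bool.false_ne_true).2 le_rfl
  have le₁₀ (p : ℝ) : (InterPoset.iota1 ε).obj p ≤ (InterPoset.iota0 ε).obj (p + ε) :=
    (InterPoset.le_iff_of_snd_ne hε Bool.false_ne_true.symm).2 le_rfl
  exact ⟨{
    φ := fun p => restrictedMap Φ i j (le₀₁ p)
    ψ := fun p => restrictedMap Φ j i (le₁₀ p)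
    φ_natural := fun _ _ _ => by
      rw [map_eq_restrictedMap Φ i, map_eq_restrictedMap Φ j, restrictedMap_comp,
        restrictedMap_comp]
    ψ_natural := fun _ _ _ => by
      rw [map_eq_restrictedMap Φ i, map_eq_restrictedMap Φ j, restrictedMap_comp,
        restrictedMap_comp]
    φ_comp_ψ := fun _ _ => by rw [map_eq_restrictedMap Φ i, restrictedMap_comp]
    ψ_comp_φ := fun _ _ => by rw [map_eq_restrictedMap Φ j, restrictedMap_comp] }⟩

/-- The `S`-cell of `u` is at most that of `v`: no point of `S` lies in `(v, u]`. -/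
def CellLE (S : Finset ℝ) (u v : ℝ) : Prop := ∀ s ∈ S, s ≤ u → s ≤ v

namespace CellLE

variable {S : Finset ℝ} {u v w : ℝ}

lemma refl (S : Finset ℝ) (u : ℝ) : CellLE S u u := fun _ _ h => h

lemma of_le (h : u ≤ v) : CellLE S u v := fun _ _ hs => hs.trans h

lemma trans (h : CellLE S u v) (h' : CellLE S v w) : CellLE S u w :=
  fun s hs hsu => h' s hs (h s hs hsu)

end CellLE

namespace IsConstructibleOn

variable {F : ℝ ⥤ C} {S : Finset ℝ}

lemma isIso_map (hF : IsConstructibleOn C F S) {a b : ℝ} (hab : a ≤ b) (hba : CellLE S b a) :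
    IsIso (F.map (homOfLE hab)) := by
  have hcrit : ∀ s ∈ S, s ≤ a ∨ b < s := fun s hs => (le_or_gt s b).imp (hba s hs) id
  by_cases hex : ∃ s ∈ S, s ≤ a
  · exact hF.2 a b hab hex hcrit
  · simp only [not_exists, not_and, not_le] at hex
    exact IsZero.isIso (hF.1 a hex)
      (hF.1 b fun s hs => (hcrit s hs).resolve_left (hex s hs).not_ge) _

def cellMap (hF : IsConstructibleOn C F S) {u v : ℝ} (h : CellLE S u v) : F.obj u ⟶ F.obj v :=
  haveI := hF.isIso_map (min_le_left u v) fun s hs hsu => le_min hsu (h s hs hsu)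
  inv (F.map (homOfLE (min_le_left u v))) ≫ F.map (homOfLE (min_le_right u v))

variable (hF : IsConstructibleOn C F S) {u v w m : ℝ}

lemma map_comp_cellMap (h : CellLE S u v) (hmu : m ≤ u) (hmv : m ≤ v) :
    F.map (homOfLE hmu) ≫ hF.cellMap h = F.map (homOfLE hmv) := by
  have hm : m ≤ min u v := le_min hmu hmv
  rw [cellMap, show F.map (homOfLE hmu) = F.map (homOfLE hm) ≫ F.map (homOfLE (min_le_left u v))
    by rw [← F.map_comp]; rfl, Category.assoc, IsIso.hom_inv_id_assoc, ← F.map_comp]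
  rfl

lemma cellMap_of_le (h : u ≤ v) : hF.cellMap (CellLE.of_le h) = F.map (homOfLE h) := by
  simpa using hF.map_comp_cellMap (CellLE.of_le h) le_rfl h

lemma cellMap_comp (huv : CellLE S u v) (hvw : CellLE S v w) :
    hF.cellMap huv ≫ hF.cellMap hvw = hF.cellMap (huv.trans hvw) := by
  have hmu : min u (min v w) ≤ u := min_le_left _ _
  have hmv : min u (min v w) ≤ v := (min_le_right _ _).trans (min_le_left _ _)
  have hmw : min u (min v w) ≤ w := (min_le_right _ _).trans (min_le_right _ _)
  have := hF.isIso_map hmu fun s hs hsu =>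
    le_min hsu (le_min (huv s hs hsu) (hvw s hs (huv s hs hsu)))
  rw [← cancel_epi (F.map (homOfLE hmu)), ← Category.assoc, hF.map_comp_cellMap huv hmu hmv,
    hF.map_comp_cellMap hvw hmv hmw, hF.map_comp_cellMap _ hmu hmw]

end IsConstructibleOn

namespace InterleavingData

variable {F G : ℝ ⥤ C} {S T : Finset ℝ} {ε : ℝ} (d : InterleavingData F G ε)
  (hF : IsConstructibleOn C F S) (hG : IsConstructibleOn C G T)

def transfer {u v a : ℝ} (hu : CellLE S u a) (hv : CellLE T (a + ε) v) :
    F.obj u ⟶ G.obj v :=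
  hF.cellMap hu ≫ d.φ a ≫ hG.cellMap hv

lemma transfer_eq_transfer {u v a a' : ℝ} (hu : CellLE S u a) (hv : CellLE T (a + ε) v)
    (hu' : CellLE S u a') (hv' : CellLE T (a' + ε) v) :
    d.transfer hF hG hu hv = d.transfer hF hG hu' hv' := by
  wlog hle : a ≤ a' generalizing a a'
  · exact (this hu' hv' hu hv (le_of_not_ge hle)).symm
  rw [transfer, transfer, ← hF.cellMap_comp hu (CellLE.of_le hle), hF.cellMap_of_le hle,
    Category.assoc, ← Category.assoc (F.map _), d.φ_natural, Category.assoc,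
    ← hG.cellMap_of_le, hG.cellMap_comp]

lemma cellMap_comp_transfer {u u' v a : ℝ} (h : CellLE S u' u) (hu : CellLE S u a)
    (hv : CellLE T (a + ε) v) :
    hF.cellMap h ≫ d.transfer hF hG hu hv = d.transfer hF hG (h.trans hu) hv := by
  rw [transfer, transfer, ← Category.assoc, hF.cellMap_comp]

lemma transfer_comp_cellMap {u v v' a : ℝ} (hu : CellLE S u a) (hv : CellLE T (a + ε) v)
    (h : CellLE T v v') :
    d.transfer hF hG hu hv ≫ hG.cellMap h = d.transfer hF hG hu (hv.trans h) := by
  rw [transfer, transfer, Category.assoc, Category.assoc, hG.cellMap_comp]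

lemma transfer_comp_transfer (hε : 0 ≤ ε) {u v w a b : ℝ} (hu : CellLE S u a)
    (hv : CellLE T (a + ε) v) (hv' : CellLE T v b) (hw : CellLE S (b + ε) w) (hab : a + ε ≤ b) :
    d.transfer hF hG hu hv ≫ d.symm.transfer hG hF hv' hw =
      hF.cellMap (hu.trans ((CellLE.of_le (by linarith : a ≤ b + ε)).trans hw)) := by
  rw [transfer, transfer, Category.assoc, Category.assoc, ← Category.assoc (hG.cellMap hv),
    hG.cellMap_comp, hG.cellMap_of_le hab, symm_φ, ← Category.assoc (G.map _),
    ← Category.assoc (d.φ a), d.φ_comp_map_comp_ψ hε hab, ← hF.cellMap_of_le, hF.cellMap_comp,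
    hF.cellMap_comp]

end InterleavingData

def DiffsAvoid (U : Finset ℝ) (I : Set ℝ) : Prop := ∀ a ∈ U, ∀ b ∈ U, a - b ∉ I

lemma DiffsAvoid.union_comm {S T : Finset ℝ} {I : Set ℝ} (h : DiffsAvoid (S ∪ T) I) :
    DiffsAvoid (T ∪ S) I :=
  Finset.union_comm S T ▸ h

open Filter Topology in
lemma eventually_diffsAvoid (U : Finset ℝ) (x : ℝ) :
    ∀ᶠ r in 𝓝[>] (0 : ℝ), DiffsAvoid U (Set.Ioo x (x + r)) := by
  have key (c : ℝ) : ∀ᶠ r in 𝓝[>] (0 : ℝ), c ∉ Set.Ioo x (x + r) := by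
    by_cases hc : x < c
    · filter_upwards [nhdsWithin_le_nhds (Iio_mem_nhds (sub_pos.2 hc))] with r hr hmem
      exact absurd hmem.2 (by simp only [Set.mem_Iio] at hr; linarith)
    · exact Eventually.of_forall fun r hmem => hc hmem.1
  simp only [DiffsAvoid, eventually_all_finset]
  exact fun a _ b _ => key (a - b)

section Approximation

variable {F G : ℝ ⥤ C} {S T : Finset ℝ} {ε₀ μ : ℝ}

lemma exists_transfer_point (h₁ : DiffsAvoid (S ∪ T) (Set.Ioo ε₀ (ε₀ + 3 * μ))) (p : ℝ) :
    ∃ a, CellLE S p a ∧ CellLE T (a + (ε₀ + μ)) (p + ε₀) := by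
  by_cases hS : ∃ s ∈ S, p - μ < s ∧ s ≤ p
  · obtain ⟨s, hs, hs₁, hs₂⟩ := hS
    refine ⟨p, CellLE.refl S p, fun t ht htp => le_of_not_gt fun htp' => ?_⟩
    exact h₁ t (Finset.mem_union_right S ht) s (Finset.mem_union_left T hs)
      ⟨by linarith, by linarith⟩
  · refine ⟨p - μ, fun s hs hsp => le_of_not_gt fun hsp' => hS ⟨s, hs, hsp', hsp⟩,
      CellLE.of_le (by linarith)⟩

lemma exists_transfer_pair (h₁ : DiffsAvoid (S ∪ T) (Set.Ioo ε₀ (ε₀ + 3 * μ)))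
    (h₂ : DiffsAvoid (S ∪ T) (Set.Ioo (2 * ε₀) (2 * ε₀ + 3 * μ))) (p : ℝ) :
    ∃ a b, CellLE S p a ∧ CellLE T (a + (ε₀ + μ)) (p + ε₀) ∧ CellLE T (p + ε₀) b ∧
      CellLE S (b + (ε₀ + μ)) (p + ε₀ + ε₀) ∧ a + (ε₀ + μ) ≤ b := by
  by_cases hS : ∃ s ∈ S, p - μ < s ∧ s ≤ p
  · obtain ⟨s, hs, hs₁, hs₂⟩ := hS
    refine ⟨p, p + ε₀ + μ, CellLE.refl S p, fun t ht htp => le_of_not_gt fun htp' => ?_,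
      CellLE.of_le (by linarith), fun s' hs' hs'p => le_of_not_gt fun hs'p' => ?_, by linarith⟩
    · exact h₁ t (Finset.mem_union_right S ht) s (Finset.mem_union_left T hs)
        ⟨by linarith, by linarith⟩
    · exact h₂ s' (Finset.mem_union_left T hs') s (Finset.mem_union_left T hs)
        ⟨by linarith, by linarith⟩
  by_cases hS' : ∃ s' ∈ S, p + ε₀ + ε₀ < s' ∧ s' ≤ p + ε₀ + ε₀ + μ
  · obtain ⟨s', hs', hs'₁, hs'₂⟩ := hS'
    refine ⟨p - 2 * μ, p + ε₀ - μ, fun s hs hsp => le_of_not_gt fun hsp' => ?_,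
      CellLE.of_le (by linarith), fun t ht htp => le_of_not_gt fun htp' => ?_,
      CellLE.of_le (by linarith), by linarith⟩
    · exact h₂ s' (Finset.mem_union_left T hs') s (Finset.mem_union_left T hs)
        ⟨by linarith, by linarith⟩
    · exact h₁ s' (Finset.mem_union_left T hs') t (Finset.mem_union_right S ht)
        ⟨by linarith, by linarith⟩
  · refine ⟨p - μ, p + ε₀, fun s hs hsp => le_of_not_gt fun hsp' => hS ⟨s, hs, hsp', hsp⟩,
      CellLE.of_le (by linarith), CellLE.refl T _,
      fun s' hs' hs'p => le_of_not_gt fun hs'p' => hS' ⟨s', hs', hs'p', by linarith⟩,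
      by linarith⟩

namespace InterleavingData

variable (d : InterleavingData F G (ε₀ + μ)) (hF : IsConstructibleOn C F S)
  (hG : IsConstructibleOn C G T)

def tightenMap (h₁ : DiffsAvoid (S ∪ T) (Set.Ioo ε₀ (ε₀ + 3 * μ))) (p : ℝ) :
    F.obj p ⟶ G.obj (p + ε₀) :=
  d.transfer hF hG (exists_transfer_point h₁ p).choose_spec.1
    (exists_transfer_point h₁ p).choose_spec.2

variable (h₁ : DiffsAvoid (S ∪ T) (Set.Ioo ε₀ (ε₀ + 3 * μ)))

lemma tightenMap_eq_transfer {p a : ℝ} (hu : CellLE S p a)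
    (hv : CellLE T (a + (ε₀ + μ)) (p + ε₀)) :
    d.tightenMap hF hG h₁ p = d.transfer hF hG hu hv :=
  d.transfer_eq_transfer hF hG _ _ hu hv

lemma tightenMap_natural {p q : ℝ} (h : p ≤ q) :
    F.map (homOfLE h) ≫ d.tightenMap hF hG h₁ q =
      d.tightenMap hF hG h₁ p ≫ G.map (homOfLE (add_le_add_left h ε₀)) := by
  rw [← hF.cellMap_of_le h, ← hG.cellMap_of_le, tightenMap, tightenMap, cellMap_comp_transfer,
    transfer_comp_cellMap]
  exact d.transfer_eq_transfer hF hG _ _ _ _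

lemma tightenMap_comp_tightenMap (h₂ : DiffsAvoid (S ∪ T) (Set.Ioo (2 * ε₀) (2 * ε₀ + 3 * μ)))
    (hμ : 0 ≤ μ) {p : ℝ} (h : p ≤ p + ε₀ + ε₀) :
    d.tightenMap hF hG h₁ p ≫ d.symm.tightenMap hG hF h₁.union_comm (p + ε₀) =
      F.map (homOfLE h) := by
  obtain ⟨a, b, hu, hv, hv', hw, hab⟩ := exists_transfer_pair h₁ h₂ p
  rw [d.tightenMap_eq_transfer hF hG h₁ hu hv, d.symm.tightenMap_eq_transfer hG hF _ hv' hw,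
    d.transfer_comp_transfer hF hG (by linarith) hu hv hv' hw hab, ← hF.cellMap_of_le h]

def tighten (h₂ : DiffsAvoid (S ∪ T) (Set.Ioo (2 * ε₀) (2 * ε₀ + 3 * μ)))
    (hμ : 0 ≤ μ) : InterleavingData F G ε₀ where
  φ := d.tightenMap hF hG h₁
  ψ := d.symm.tightenMap hG hF h₁.union_comm
  φ_natural _ _ := d.tightenMap_natural hF hG h₁
  ψ_natural _ _ := d.symm.tightenMap_natural hG hF h₁.union_comm
  φ_comp_ψ _ := d.tightenMap_comp_tightenMap hF hG h₁ h₂ hμ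
  ψ_comp_φ _ := d.symm.tightenMap_comp_tightenMap hG hF h₁.union_comm h₂.union_comm hμ

end InterleavingData

end Approximation

lemma IsConstructibleOn.interleaved_of_forall_gt {F G : ℝ ⥤ C} {S T : Finset ℝ}
    (hF : IsConstructibleOn C F S) (hG : IsConstructibleOn C G T) {ε₀ : ℝ} (hε₀ : 0 ≤ ε₀)
    (h : ∀ ε, ε₀ < ε → Interleaved C F G ε) : Interleaved C F G ε₀ := by
  obtain ⟨r, ⟨h₁, h₂⟩, hr⟩ := (((eventually_diffsAvoid (S ∪ T) ε₀).and
    (eventually_diffsAvoid (S ∪ T) (2 * ε₀))).and self_mem_nhdsWithin).exists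
  have hr : 0 < r := hr
  have h3 : 3 * (r / 3) = r := by ring
  obtain ⟨d⟩ := (h (ε₀ + r / 3) (by linarith)).nonempty_interleavingData (by positivity)
  exact (d.tighten hF hG (by rwa [h3]) (by rwa [h3]) (by positivity)).interleaved hε₀

lemma exists_isLeast_interleaved {F G : ℝ ⥤ C}
    (hclosed : ∀ ε₀, 0 ≤ ε₀ → (∀ ε, ε₀ < ε → Interleaved C F G ε) → Interleaved C F G ε₀)
    (hne : ∃ ε, 0 ≤ ε ∧ Interleaved C F G ε) :
    ∃ ε, IsLeast {ε | 0 ≤ ε ∧ Interleaved C F G ε} ε := by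
  have hnonneg : 0 ≤ sInf {ε | 0 ≤ ε ∧ Interleaved C F G ε} := le_csInf hne fun _ h => h.1
  refine ⟨_, ⟨hnonneg, hclosed _ hnonneg fun ε hε => ?_⟩,
    fun _ h => csInf_le ⟨0, fun _ h => h.1⟩ h⟩
  obtain ⟨ε', hε', hlt⟩ := exists_lt_of_csInf_lt hne hε
  exact hε'.2.mono hlt.le

lemma interleavingDist_eq_ofReal {F G : ℝ ⥤ C} {ε : ℝ}
    (h : IsLeast {ε | 0 ≤ ε ∧ Interleaved C F G ε} ε) :
    interleavingDist C F G = ENNReal.ofReal ε := by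
  refine le_antisymm (sInf_le ⟨ε, h.1.1, h.1.2, rfl⟩) (le_sInf ?_)
  rintro _ ⟨ε', hε', hI, rfl⟩
  exact ENNReal.ofReal_le_ofReal (h.2 ⟨hε', hI⟩)

end

theorem interleaving_infimum_attained_general {C : Type u} [Category.{v} C]
    (F G : ℝ ⥤ C) (hF : IsConstructible C F) (hG : IsConstructible C G) :
    (∀ ε₀ : ℝ, 0 ≤ ε₀ → (∀ ε : ℝ, ε₀ < ε → Interleaved C F G ε) →
      Interleaved C F G ε₀) ∧
    ((∃ ε : ℝ, 0 ≤ ε ∧ Interleaved C F G ε) →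
      ∃ ε : ℝ, 0 ≤ ε ∧ Interleaved C F G ε ∧
        ENNReal.ofReal ε = interleavingDist C F G) := by
  obtain ⟨S, hS⟩ := hF
  obtain ⟨T, hT⟩ := hG
  have attained (ε₀ : ℝ) (hε₀ : 0 ≤ ε₀) (h : ∀ ε, ε₀ < ε → Interleaved C F G ε) :
      Interleaved C F G ε₀ :=
    hS.interleaved_of_forall_gt hT hε₀ h
  refine ⟨attained, fun hne => ?_⟩
  obtain ⟨ε, hε⟩ := exists_isLeast_interleaved attained hne
  exact ⟨ε, hε.1.1, hε.1.2, (interleavingDist_eq_ofReal hε).symm⟩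

/-- **The interleaving infimum is attained**: let `F` and `G` be constructible persistence
modules valued in a skeletally small abelian category and `ε₀ ≥ 0`.  If `F` and `G` are
`ε`-interleaved for every `ε > ε₀`, then they are `ε₀`-interleaved.  Consequently, if `F`
and `G` are interleaved at all, the infimum defining `d_I(F, G)` is attained. -/
theorem interleaving_infimum_attained {C : Type u} [Category.{v} C] [Abelian C]
    (F G : ℝ ⥤ C) (hF : IsConstructible C F) (hG : IsConstructible C G) :
    (∀ ε₀ : ℝ, 0 ≤ ε₀ → (∀ ε : ℝ, ε₀ < ε → Interleaved C F G ε) →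
      Interleaved C F G ε₀) ∧
    ((∃ ε : ℝ, 0 ≤ ε ∧ Interleaved C F G ε) →
      ∃ ε : ℝ, 0 ≤ ε ∧ Interleaved C F G ε ∧
        ENNReal.ofReal ε = interleavingDist C F G) :=
  interleaving_infimum_attained_general F G hF hG
end
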